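/- Assume the event T_α holds for some 0 ≤ α < 1 and λ0 > 0. Let S ⊆ {1,…,p} be nonempty with s := |S| and φ(6,S) > 0, and choose the tuning parameter λ := λ0 · (φ²(6,S)/s)^{(1−α)/2}. Then ‖f̂ − f⁰‖_n² + λ‖β̂ − b^S‖₁ ≤ (343/6)·λ0²·(s/φ²(6,S))^{α} + 7‖ff_S − f⁰‖_n². -/

import Mathlib

open Finset

noncomputable section

/-- Squared normalized norm: `‖v‖ₙ² = ‖v‖₂²/n`. -/
def nsq (n : ℕ) (v : Fin n → ℝ) : ℝ := (∑ i, v i ^ 2) / n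

/-- Normalized norm `‖v‖ₙ`. -/
def nnorm (n : ℕ) (v : Fin n → ℝ) : ℝ := Real.sqrt (nsq n v)

/-- `ℓ₁`-norm of a coefficient vector. -/
def l1 {p : ℕ} (β : Fin p → ℝ) : ℝ := ∑ j, |β j|

/-- `f_β := ∑ⱼ βⱼ ψⱼ`. -/
def fvec {n p : ℕ} (ψ : Fin p → Fin n → ℝ) (β : Fin p → ℝ) : Fin n → ℝ :=
  fun i => ∑ j, β j * ψ j i

/-- Restriction `β_S` of `β` to an index set `S`. -/
def restr {p : ℕ} (S : Finset (Fin p)) (β : Fin p → ℝ) : Fin p → ℝ :=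
  fun j => if j ∈ S then β j else 0

/-- Compatibility constant `φ²(L,S)`. -/
def phiSq {n p : ℕ} (ψ : Fin p → Fin n → ℝ) (L : ℝ) (S : Finset (Fin p)) : ℝ :=
  sInf {x : ℝ | ∃ β : Fin p → ℝ, l1 (restr S β) = 1 ∧ l1 (β - restr S β) ≤ L ∧
    x = S.card * nsq n (fvec ψ (restr S β) - fvec ψ (β - restr S β))}

/-- Covering number `N(δ, F, ‖·‖ₙ)`. -/
def covN (n : ℕ) (δ : ℝ) (F : Set (Fin n → ℝ)) : ℕ :=
  sInf {N : ℕ | ∃ g : Fin N → (Fin n → ℝ), ∀ f ∈ F, ∃ k, nnorm n (f - g k) ≤ δ}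

/-! Comparing the Lasso objective at `β̂` and at `b := b^S` gives the basic inequality
`‖f̂ - f⁰‖ₙ² + λ‖β̂‖₁ ≤ ‖f_b - f⁰‖ₙ² + λ‖b‖₁ + 2εᵀf_δ/n` with `δ := β̂ - b`.
Put `σ² := s/φ²(6,S)`. Then `λ0 = λσ^{1-α}`, so on `T_α` the noise term is at most
`(λ/2) max(σ‖f_δ‖ₙ, ‖δ‖₁)`, a weighted geometric mean being at most the maximum.
Either `‖δ‖₁ ≤ σ‖f_δ‖ₙ`; or `λ‖δ_S‖₁` is dominated by `‖f_b - f⁰‖ₙ²`; or `δ` lies in the cone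
`‖δ_{Sᶜ}‖₁ ≤ 6‖δ_S‖₁`, where the compatibility constant gives `‖δ_S‖₁ ≤ σ‖f_δ‖ₙ`.
In every case `‖f_δ‖ₙ ≤ ‖f̂ - f⁰‖ₙ + ‖f_b - f⁰‖ₙ` and `2xy ≤ x² + y²` conclude. -/

lemma nsq_nonneg (n : ℕ) (v : Fin n → ℝ) : 0 ≤ nsq n v := by
  unfold nsq; positivity

lemma nnorm_nonneg (n : ℕ) (v : Fin n → ℝ) : 0 ≤ nnorm n v := Real.sqrt_nonneg _

lemma nnorm_sq (n : ℕ) (v : Fin n → ℝ) : nnorm n v ^ 2 = nsq n v :=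
  Real.sq_sqrt (nsq_nonneg n v)

lemma nnorm_eq_norm_div_sqrt (n : ℕ) (v : Fin n → ℝ) :
    nnorm n v = ‖WithLp.toLp 2 v‖ / √n := by
  simp [nnorm, nsq, EuclideanSpace.norm_eq, Real.sqrt_div' _ n.cast_nonneg]

lemma nnorm_sub_le (n : ℕ) (v w : Fin n → ℝ) : nnorm n (v - w) ≤ nnorm n v + nnorm n w := by
  simp only [nnorm_eq_norm_div_sqrt, ← add_div, WithLp.toLp_sub]
  gcongr
  exact norm_sub_le _ _

lemma nsq_smul (n : ℕ) (c : ℝ) (v : Fin n → ℝ) : nsq n (c • v) = c ^ 2 * nsq n v := by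
  simp [nsq, mul_pow, ← Finset.mul_sum, mul_div_assoc]

lemma l1_nonneg {p : ℕ} (β : Fin p → ℝ) : 0 ≤ l1 β := by
  unfold l1; positivity

lemma l1_smul {p : ℕ} (c : ℝ) (β : Fin p → ℝ) : l1 (c • β) = |c| * l1 β := by
  simp [l1, abs_mul, Finset.mul_sum]

lemma fvec_sub {n p : ℕ} (ψ : Fin p → Fin n → ℝ) (β γ : Fin p → ℝ) :
    fvec ψ (β - γ) = fvec ψ β - fvec ψ γ := by
  funext i
  simp [fvec, sub_mul]

lemma fvec_smul {n p : ℕ} (ψ : Fin p → Fin n → ℝ) (c : ℝ) (β : Fin p → ℝ) :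
    fvec ψ (c • β) = c • fvec ψ β := by
  funext i
  simp [fvec, Finset.mul_sum, mul_assoc]

lemma l1_restr_add_l1_sub_restr {p : ℕ} (S : Finset (Fin p)) (β : Fin p → ℝ) :
    l1 (restr S β) + l1 (β - restr S β) = l1 β := by
  simp only [l1, ← Finset.sum_add_distrib]
  refine Finset.sum_congr rfl fun j _ => ?_
  by_cases hj : j ∈ S <;> simp [restr, hj]

lemma l1_add_l1_sub_restr_le {p : ℕ} (S : Finset (Fin p)) (β b : Fin p → ℝ)
    (hb : ∀ j, j ∉ S → b j = 0) :
    l1 b + l1 ((β - b) - restr S (β - b)) ≤ l1 β + l1 (restr S (β - b)) := by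
  simp only [l1, ← Finset.sum_add_distrib]
  refine Finset.sum_le_sum fun j _ => ?_
  by_cases hj : j ∈ S
  · simp only [restr, hj, if_true, Pi.sub_apply, sub_self, abs_zero, add_zero]
    linarith [abs_sub_abs_le_abs_sub (b j) (β j), abs_sub_comm (b j) (β j)]
  · simp [restr, hj, hb j hj]

lemma rpow_mul_rpow_le_max {x y α : ℝ} (hx : 0 ≤ x) (hy : 0 ≤ y) (hα0 : 0 ≤ α) (hα1 : α ≤ 1) :
    x ^ (1 - α) * y ^ α ≤ max x y :=
  calc x ^ (1 - α) * y ^ α ≤ (1 - α) * x + α * y :=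
        Real.geom_mean_le_arith_mean2_weighted (by linarith) hα0 hx hy (by ring)
    _ ≤ (1 - α) * max x y + α * max x y :=
        add_le_add (mul_le_mul_of_nonneg_left (le_max_left _ _) (by linarith))
          (mul_le_mul_of_nonneg_left (le_max_right _ _) hα0)
    _ = max x y := by ring

lemma mul_sqrt_rpow_eq {t lam0 α : ℝ} (ht : 0 < t) :
    lam0 * t⁻¹ ^ ((1 - α) / 2) * √t ^ (1 - α) = lam0 := by
  rw [Real.sqrt_eq_rpow, ← Real.rpow_mul ht.le, Real.inv_rpow ht.le, mul_assoc,
    one_div_mul_eq_div, inv_mul_cancel₀ (Real.rpow_pos_of_pos ht _).ne', mul_one]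

lemma sq_mul_sqrt_eq {t lam0 lam α : ℝ} (ht : 0 < t) (h : lam0 = lam * √t ^ (1 - α)) :
    lam0 ^ 2 * t ^ α = (lam * √t) ^ 2 := by
  have hsq : (√t ^ (1 - α)) ^ 2 = t ^ (1 - α) := by
    rw [← Real.rpow_mul_natCast (Real.sqrt_nonneg t), mul_comm,
      Real.rpow_natCast_mul (Real.sqrt_nonneg t), Real.sq_sqrt ht.le]
  rw [h, mul_pow, hsq, mul_assoc, ← Real.rpow_add ht, sub_add_cancel, Real.rpow_one, mul_pow,
    Real.sq_sqrt ht.le]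

section Compatibility

variable {n p : ℕ} (ψ : Fin p → Fin n → ℝ) {L : ℝ} {S : Finset (Fin p)}

lemma phiSq_le {β : Fin p → ℝ} (hβS : l1 (restr S β) = 1) (hβSc : l1 (β - restr S β) ≤ L) :
    phiSq ψ L S ≤ S.card * nsq n (fvec ψ (restr S β) - fvec ψ (β - restr S β)) := by
  refine csInf_le ⟨0, ?_⟩ ⟨β, hβS, hβSc, rfl⟩
  rintro _ ⟨γ, -, -, rfl⟩
  exact mul_nonneg (Nat.cast_nonneg _) (nsq_nonneg _ _)

lemma phiSq_mul_l1_restr_sq_le {δ : Fin p → ℝ}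
    (hcone : l1 (δ - restr S δ) ≤ L * l1 (restr S δ)) :
    phiSq ψ L S * l1 (restr S δ) ^ 2 ≤ S.card * nsq n (fvec ψ δ) := by
  set d := l1 (restr S δ)
  have hd0 : 0 ≤ d := l1_nonneg _
  rcases hd0.eq_or_lt with hd | hd
  · rw [← hd]
    simpa using mul_nonneg (Nat.cast_nonneg S.card) (nsq_nonneg n (fvec ψ δ))
  -- flip the sign of `δ` off `S`, so that `f_{β_S} - f_{β_{Sᶜ}} = f_δ / d`
  set β := d⁻¹ • (restr S δ - (δ - restr S δ))
  have hβS : restr S β = d⁻¹ • restr S δ := by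
    funext j; by_cases hj : j ∈ S <;> simp [β, restr, hj]
  have hβSc : β - restr S β = (-d⁻¹) • (δ - restr S δ) := by
    funext j; by_cases hj : j ∈ S <;> simp [β, restr, hj]
  have hfβ : fvec ψ (restr S β) - fvec ψ (β - restr S β) = d⁻¹ • fvec ψ δ := by
    rw [← fvec_sub, hβSc, hβS, ← fvec_smul]
    congr 1
    module
  have hle := phiSq_le ψ (β := β) (L := L) (S := S)
    (by rw [hβS, l1_smul, abs_of_pos (inv_pos.2 hd), inv_mul_cancel₀ hd.ne'])
    (by rw [hβSc, l1_smul, abs_neg, abs_of_pos (inv_pos.2 hd), inv_mul_le_iff₀ hd]; linarith)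
  rw [hfβ, nsq_smul] at hle
  calc phiSq ψ L S * d ^ 2 ≤ S.card * (d⁻¹ ^ 2 * nsq n (fvec ψ δ)) * d ^ 2 := by gcongr
    _ = S.card * nsq n (fvec ψ δ) := by field_simp

lemma l1_restr_le_sqrt_mul_nnorm (hφ : 0 < phiSq ψ L S) {δ : Fin p → ℝ}
    (hcone : l1 (δ - restr S δ) ≤ L * l1 (restr S δ)) :
    l1 (restr S δ) ≤ √(S.card / phiSq ψ L S) * nnorm n (fvec ψ δ) := by
  rw [← pow_le_pow_iff_left₀ (l1_nonneg _)
    (mul_nonneg (Real.sqrt_nonneg _) (nnorm_nonneg _ _)) two_ne_zero, mul_pow,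
    Real.sq_sqrt (by positivity), nnorm_sq, div_mul_eq_mul_div, le_div_iff₀ hφ, mul_comm]
  exact phiSq_mul_l1_restr_sq_le ψ hcone

end Compatibility

lemma basic_inequality {n : ℕ} (f0 e fh fb : Fin n → ℝ) {ph pb : ℝ}
    (h : (∑ i, (f0 i + e i - fh i) ^ 2) / n + ph ≤ (∑ i, (f0 i + e i - fb i) ^ 2) / n + pb) :
    nsq n (fh - f0) + ph ≤ nsq n (fb - f0) + pb + 2 * (∑ i, e i * (fh - fb) i) / n := by
  have hexpand : ∑ i, (f0 i + e i - fh i) ^ 2 - ∑ i, (f0 i + e i - fb i) ^ 2 =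
      ∑ i, (fh - f0) i ^ 2 - ∑ i, (fb - f0) i ^ 2 - 2 * ∑ i, e i * (fh - fb) i := by
    simp only [Finset.mul_sum, ← Finset.sum_sub_distrib]
    exact Finset.sum_congr rfl fun i _ => by simp only [Pi.sub_apply]; ring
  have hdiv := congrArg (· / (n : ℝ)) hexpand
  simp only [sub_div] at hdiv
  unfold nsq
  linarith

lemma two_mul_inner_div_le {n p : ℕ} (ψ : Fin p → Fin n → ℝ) (ε : Fin n → ℝ)
    {α lam0 lam σ : ℝ} (hα0 : 0 ≤ α) (hα1 : α ≤ 1) (hlam : 0 ≤ lam) (hσ : 0 ≤ σ)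
    (hlam0 : lam0 = lam * σ ^ (1 - α))
    (hT : ∀ β : Fin p → ℝ,
      4 * |∑ i, ε i * fvec ψ β i| / n ≤ lam0 * nnorm n (fvec ψ β) ^ (1 - α) * l1 β ^ α)
    (δ : Fin p → ℝ) :
    2 * (∑ i, ε i * fvec ψ δ i) / n ≤ lam * max (σ * nnorm n (fvec ψ δ)) (l1 δ) / 2 :=
  calc 2 * (∑ i, ε i * fvec ψ δ i) / n ≤ 2 * |∑ i, ε i * fvec ψ δ i| / n := by
        gcongr; exact le_abs_self _
    _ = (4 * |∑ i, ε i * fvec ψ δ i| / n) / 2 := by ring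
    _ ≤ lam0 * nnorm n (fvec ψ δ) ^ (1 - α) * l1 δ ^ α / 2 := by gcongr; exact hT δ
    _ = lam * ((σ * nnorm n (fvec ψ δ)) ^ (1 - α) * l1 δ ^ α) / 2 := by
        rw [hlam0, Real.mul_rpow hσ (nnorm_nonneg _ _)]; ring
    _ ≤ lam * max (σ * nnorm n (fvec ψ δ)) (l1 δ) / 2 := by
        gcongr
        exact rpow_mul_rpow_le_max (mul_nonneg hσ (nnorm_nonneg _ _)) (l1_nonneg _) hα0 hα1

lemma lasso_dichotomy {A B lam σ F DS Dc : ℝ} (hA : 0 ≤ A) (hlam : 0 < lam) (hDc : 0 ≤ Dc)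
    (hstar : A + lam * Dc ≤ B + lam * max (σ * F) (DS + Dc) / 2 + lam * DS)
    (hcompat : Dc ≤ 6 * DS → DS ≤ σ * F) :
    A + lam * (DS + Dc) ≤ 14 / 3 * B ∨ A + lam * (DS + Dc) ≤ 2 * B + 4 * (lam * σ) * F := by
  rcases le_total (DS + Dc) (σ * F) with hD | hD
  · right
    rw [max_eq_left hD] at hstar
    nlinarith [mul_le_mul_of_nonneg_left (show DS ≤ σ * F by linarith) hlam.le]
  · rw [max_eq_right hD] at hstar
    by_cases hDS : lam * DS ≤ 2 / 3 * B
    · left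
      linarith
    · right
      have hDc6 : Dc ≤ 6 * DS := le_of_mul_le_mul_left (by linarith) hlam
      nlinarith [mul_le_mul_of_nonneg_left (hcompat hDc6) hlam.le]

lemma oracle_of_dichotomy {R Bn u F X : ℝ} (hu : 0 ≤ u) (hX : 0 ≤ X)
    (hF : F ≤ R + Bn) (h : R ^ 2 + X ≤ 14 / 3 * Bn ^ 2 ∨ R ^ 2 + X ≤ 2 * Bn ^ 2 + 4 * u * F) :
    R ^ 2 + X ≤ 343 / 6 * u ^ 2 + 7 * Bn ^ 2 := by
  rcases h with h | h
  · nlinarith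
  · nlinarith [sq_nonneg (R - 4 * u), sq_nonneg (Bn - 2 * u), mul_le_mul_of_nonneg_left hF hu]

theorem stmt2_general {n p : ℕ}
    (ψ : Fin p → Fin n → ℝ)
    (β0 : Fin p → ℝ) (ε : Fin n → ℝ)
    (α lam0 lam : ℝ) (hα0 : 0 ≤ α) (hα1 : α < 1) (hlam0 : 0 < lam0)
    (S : Finset (Fin p)) (hSne : S.Nonempty) (hphi : 0 < phiSq ψ 6 S)
    (hlam : lam = lam0 * (phiSq ψ 6 S / S.card) ^ ((1 - α) / 2))
    (hT : ∀ β : Fin p → ℝ,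
      4 * |∑ i, ε i * fvec ψ β i| / n ≤
        lam0 * nnorm n (fvec ψ β) ^ (1 - α) * l1 β ^ α)
    (hatβ : Fin p → ℝ)
    (hmin : ∀ β : Fin p → ℝ,
      (∑ i, (fvec ψ β0 i + ε i - fvec ψ hatβ i) ^ 2) / n + lam * l1 hatβ ≤
        (∑ i, (fvec ψ β0 i + ε i - fvec ψ β i) ^ 2) / n + lam * l1 β)
    (bS : Fin p → ℝ) (hbS_supp : ∀ j, j ∉ S → bS j = 0)
 :
    nsq n (fvec ψ hatβ - fvec ψ β0) + lam * l1 (hatβ - bS) ≤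
      (343 / 6) * lam0 ^ 2 * ((S.card : ℝ) / phiSq ψ 6 S) ^ α
        + 7 * nsq n (fvec ψ bS - fvec ψ β0) := by
  set t := (S.card : ℝ) / phiSq ψ 6 S
  have ht : 0 < t := div_pos (by exact_mod_cast hSne.card_pos) hphi
  have hlam_pos : 0 < lam := by rw [hlam]; positivity
  have hlam0_eq : lam0 = lam * √t ^ (1 - α) := by rw [hlam, ← inv_div, mul_sqrt_rpow_eq ht]
  set δ := hatβ - bS
  have hbasic := basic_inequality _ _ _ _ (hmin bS)
  rw [← fvec_sub ψ hatβ bS] at hbasic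
  have hnoise := two_mul_inner_div_le ψ ε hα0 hα1.le hlam_pos.le (Real.sqrt_nonneg t) hlam0_eq hT δ
  have hl1 := mul_le_mul_of_nonneg_left (l1_add_l1_sub_restr_le S hatβ bS hbS_supp) hlam_pos.le
  have hsplit := l1_restr_add_l1_sub_restr S δ
  have hdich := lasso_dichotomy (B := nsq n (fvec ψ bS - fvec ψ β0))
    (nsq_nonneg n (fvec ψ hatβ - fvec ψ β0)) hlam_pos (l1_nonneg _)
    (by rw [hsplit]; linarith) (l1_restr_le_sqrt_mul_nnorm ψ hphi (δ := δ))
  have htri : nnorm n (fvec ψ δ) ≤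
      nnorm n (fvec ψ hatβ - fvec ψ β0) + nnorm n (fvec ψ bS - fvec ψ β0) := by
    rw [show fvec ψ δ = (fvec ψ hatβ - fvec ψ β0) - (fvec ψ bS - fvec ψ β0) by
      rw [fvec_sub]; abel]
    exact nnorm_sub_le _ _ _
  rw [mul_assoc _ (lam0 ^ 2), sq_mul_sqrt_eq ht hlam0_eq, ← nnorm_sq, ← nnorm_sq]
  rw [← nnorm_sq, ← nnorm_sq, hsplit] at hdich
  exact oracle_of_dichotomy (mul_nonneg hlam_pos.le (Real.sqrt_nonneg t))
    (mul_nonneg hlam_pos.le (l1_nonneg _)) htri hdich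

theorem stmt2 {n p : ℕ} (hn : 1 ≤ n) (hp : 1 ≤ p)
    (ψ : Fin p → Fin n → ℝ) (hψ : ∀ j, ∑ i, (ψ j i) ^ 2 ≤ (n : ℝ))
    (β0 : Fin p → ℝ) (ε : Fin n → ℝ)
    (α lam0 lam : ℝ) (hα0 : 0 ≤ α) (hα1 : α < 1) (hlam0 : 0 < lam0)
    (S : Finset (Fin p)) (hSne : S.Nonempty) (hphi : 0 < phiSq ψ 6 S)
    (hlam : lam = lam0 * (phiSq ψ 6 S / S.card) ^ ((1 - α) / 2))
    (hT : ∀ β : Fin p → ℝ,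
      4 * |∑ i, ε i * fvec ψ β i| / n ≤
        lam0 * nnorm n (fvec ψ β) ^ (1 - α) * l1 β ^ α)
    (hatβ : Fin p → ℝ)
    (hmin : ∀ β : Fin p → ℝ,
      (∑ i, (fvec ψ β0 i + ε i - fvec ψ hatβ i) ^ 2) / n + lam * l1 hatβ ≤
        (∑ i, (fvec ψ β0 i + ε i - fvec ψ β i) ^ 2) / n + lam * l1 β)
    (bS : Fin p → ℝ) (hbS_supp : ∀ j, j ∉ S → bS j = 0)
    (hbS_proj : ∀ b : Fin p → ℝ, (∀ j, j ∉ S → b j = 0) →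
      nsq n (fvec ψ bS - fvec ψ β0) ≤ nsq n (fvec ψ b - fvec ψ β0))
 :
    nsq n (fvec ψ hatβ - fvec ψ β0) + lam * l1 (hatβ - bS) ≤
      (343 / 6) * lam0 ^ 2 * ((S.card : ℝ) / phiSq ψ 6 S) ^ α
        + 7 * nsq n (fvec ψ bS - fvec ψ β0) :=
  stmt2_general ψ β0 ε α lam0 lam hα0 hα1 hlam0 S hSne hphi hlam hT hatβ hmin bS hbS_supp
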